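/- arXiv:2510.06493 — 2 statements merged into one kernel-verified Lean document; each statement's English description precedes it below -/
import Mathlib

section
/- For every n ≥ 2, |P_B^{(0,0)}(n)| + |P_B^{(1,0)}(n)| + |P_B^{(1,2)}(n)| + |P_B^{(0,2)}(n)| = B_n + 6, where B_n is the total number of top-cut patterns of size n occurring in T. -/
/-- Whether the unit triangle at row `r`, column `c` of the Sierpiński triangle is filled:
upward units `(r, 2j)` are filled iff `choose r j` is odd; downward units are unfilled. -/
def filled (r c : ℕ) : Bool :=
  decide (c % 2 = 0 ∧ Nat.choose r (c / 2) % 2 = 1)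

/-- The upward pattern of size `n` at upward position `(r, c)`. -/
def upPattern (n r c : ℕ) : ℕ × ℕ → Bool := fun q =>
  if q.1 < n ∧ q.2 ≤ 2 * q.1 then filled (r + q.1) (c + q.2) else false

/-- The set of all upward patterns of size `n` occurring in the Sierpiński triangle. -/
def Pup (n : ℕ) : Set (ℕ × ℕ → Bool) :=
  { p | ∃ r c : ℕ, c % 2 = 0 ∧ c ≤ 2 * r ∧ p = upPattern n r c }

/-- The downward pattern of size `n` at downward position `(r, c)`. -/
def downPattern (n r c : ℕ) : ℕ × ℕ → Bool := fun q =>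
  if q.1 < n ∧ q.2 ≤ 2 * (n - 1 - q.1) then filled (r + q.1) (c + 2 * q.1 + q.2) else false

/-- The set of all downward patterns of size `n` occurring in the Sierpiński triangle. -/
def Pdown (n : ℕ) : Set (ℕ × ℕ → Bool) :=
  { p | ∃ r c : ℕ, c % 2 = 1 ∧ c + 2 * (n - 1) ≤ 2 * r ∧ p = downPattern n r c }

/-- The top-cut pattern of size `n` at upward position `(r, c)` (apex unit removed). -/
def topCutPattern (n r c : ℕ) : ℕ × ℕ → Bool := fun q =>
  if 1 ≤ q.1 ∧ q.1 < n ∧ q.2 ≤ 2 * q.1 then filled (r + q.1) (c + q.2) else false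

/-- The set of all top-cut patterns of size `n` occurring in the Sierpiński triangle. -/
def PtopCut (n : ℕ) : Set (ℕ × ℕ → Bool) :=
  { p | ∃ r c : ℕ, c % 2 = 0 ∧ c ≤ 2 * r ∧ p = topCutPattern n r c }

/-- The bottom-cut pattern of size `n` at upward position `(r, c)`
(both bottom corner units removed). -/
def botCutPattern (n r c : ℕ) : ℕ × ℕ → Bool := fun q =>
  if (q.1 < n ∧ q.2 ≤ 2 * q.1) ∧ ¬(q.1 = n - 1 ∧ (q.2 = 0 ∨ q.2 = 2 * (n - 1)))
  then filled (r + q.1) (c + q.2) else false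

/-- The set of all bottom-cut patterns of size `n` occurring in the Sierpiński triangle. -/
def PbotCut (n : ℕ) : Set (ℕ × ℕ → Bool) :=
  { p | ∃ r c : ℕ, c % 2 = 0 ∧ c ≤ 2 * r ∧ p = botCutPattern n r c }

/-- The fully-cut pattern of size `n` at upward position `(r, c)`
(all three corner units removed). -/
def fullyCutPattern (n r c : ℕ) : ℕ × ℕ → Bool := fun q =>
  if (q.1 < n ∧ q.2 ≤ 2 * q.1) ∧ q ≠ (0, 0) ∧ ¬(q.1 = n - 1 ∧ (q.2 = 0 ∨ q.2 = 2 * (n - 1)))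
  then filled (r + q.1) (c + q.2) else false

/-- The set of all fully-cut patterns of size `n` occurring in the Sierpiński triangle. -/
def PfullyCut (n : ℕ) : Set (ℕ × ℕ → Bool) :=
  { p | ∃ r c : ℕ, c % 2 = 0 ∧ c ≤ 2 * r ∧ p = fullyCutPattern n r c }

/-- Upward patterns of size `m` occurring inside the approximation `T_N`
(rows `0, …, 2^N - 1`). -/
def PupN (N m : ℕ) : Set (ℕ × ℕ → Bool) :=
  { p | ∃ r c : ℕ, c % 2 = 0 ∧ c ≤ 2 * r ∧ r + m ≤ 2 ^ N ∧ p = upPattern m r c }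

/-- Upward patterns of size `n` at positions with `r ≡ ρ [MOD 2]` and `c ≡ γ [MOD 4]`. -/
def PupRC (n ρ γ : ℕ) : Set (ℕ × ℕ → Bool) :=
  { p | ∃ r c : ℕ, c % 2 = 0 ∧ c ≤ 2 * r ∧ r % 2 = ρ ∧ c % 4 = γ ∧ p = upPattern n r c }

/-- Downward patterns of size `n` at positions with `r ≡ ρ [MOD 2]` and `c ≡ γ [MOD 4]`. -/
def PdownRC (n ρ γ : ℕ) : Set (ℕ × ℕ → Bool) :=
  { p | ∃ r c : ℕ, c % 2 = 1 ∧ c + 2 * (n - 1) ≤ 2 * r ∧ r % 2 = ρ ∧ c % 4 = γ ∧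
      p = downPattern n r c }

/-- Top-cut patterns of size `n` at positions with `r ≡ ρ [MOD 2]` and `c ≡ γ [MOD 4]`. -/
def PtopCutRC (n ρ γ : ℕ) : Set (ℕ × ℕ → Bool) :=
  { p | ∃ r c : ℕ, c % 2 = 0 ∧ c ≤ 2 * r ∧ r % 2 = ρ ∧ c % 4 = γ ∧ p = topCutPattern n r c }

/-- Fully-cut patterns of size `n` at positions with `r ≡ ρ [MOD 2]` and `c ≡ γ [MOD 4]`. -/
def PfullyCutRC (n ρ γ : ℕ) : Set (ℕ × ℕ → Bool) :=
  { p | ∃ r c : ℕ, c % 2 = 0 ∧ c ≤ 2 * r ∧ r % 2 = ρ ∧ c % 4 = γ ∧ p = fullyCutPattern n r c }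

/-- The everywhere-unfilled upward pattern. -/
def blankUp : ℕ × ℕ → Bool := fun _ => false

/-- The upward pattern that is filled exactly at the apex `(0, 0)`. -/
def topUp : ℕ × ℕ → Bool := fun q => decide (q = (0, 0))

/-- The size-`N` upward pattern that is filled exactly at the bottom-left corner `(N-1, 0)`. -/
def botleftUp (N : ℕ) : ℕ × ℕ → Bool := fun q => decide (q = (N - 1, 0))

/-- The size-`N` upward pattern filled exactly at the bottom-right corner `(N-1, 2(N-1))`. -/
def botrightUp (N : ℕ) : ℕ × ℕ → Bool := fun q => decide (q = (N - 1, 2 * (N - 1)))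

/-- The everywhere-unfilled downward pattern. -/
def blankDown : ℕ × ℕ → Bool := fun _ => false

/-- The size-`N` downward pattern filled exactly at the upward units along the top side:
positions `(0, m)` with `m` odd, `1 ≤ m ≤ 2N - 3`. -/
def topsideDown (N : ℕ) : ℕ × ℕ → Bool := fun q =>
  decide (q.1 = 0 ∧ q.2 % 2 = 1 ∧ 1 ≤ q.2 ∧ q.2 ≤ 2 * N - 3)

/-- The size-`N` downward pattern filled exactly at the upward units along the left side:
positions `(k, 1)` with `0 ≤ k ≤ N - 2`. -/
def leftsideDown (N : ℕ) : ℕ × ℕ → Bool := fun q =>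
  decide (q.2 = 1 ∧ q.1 ≤ N - 2)

/-- The size-`N` downward pattern filled exactly at the upward units along the right side:
positions `(k, 2(N-1-k) - 1)` with `0 ≤ k ≤ N - 2`. -/
def rightsideDown (N : ℕ) : ℕ × ℕ → Bool := fun q =>
  decide (q.1 ≤ N - 2 ∧ q.2 = 2 * (N - 1 - q.1) - 1)


/-!
Lucas' theorem at the prime 2 says that Pascal's triangle mod 2 is generated by the substitution
`x ↦ [[x, 0], [x, x]]` on 2 × 2 blocks. Hence local features of a column of it — a descent `1, 0`,
an isolated ascent `0, 1, 1`, two consecutive ones, a one in an even row — pin down the parity of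
the row or of the column where they occur.

By Pascal's rule, the top-cut pattern at `(r, 2j)` is determined by its two edges, which are the
columns `j` and `r - j` of Pascal's triangle mod 2 along the rows `r + 1, …, r + n - 1`. A case
analysis of these two columns shows that the pattern determines the phase `(r mod 2, j mod 2)`,
except for four patterns: the blank one occurs at all four phases, the one filled exactly in its
first row at the two phases with `r` even, and each of the two patterns filled exactly at one
bottom corner at two phases. Counting the patterns of `B_n` with their number of phases therefore
gives `B_n + 3 + 1 + 1 + 1`.
-/

def binomParity (R J : ℕ) : ℕ := R.choose J % 2

lemma binomParity_le_one (R J : ℕ) : binomParity R J ≤ 1 :=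
  Nat.le_of_lt_succ (Nat.mod_lt _ two_pos)

lemma binomParity_succ_succ (R J : ℕ) :
    binomParity (R + 1) (J + 1) = (binomParity R J + binomParity R (J + 1)) % 2 := by
  rw [binomParity, Nat.choose_succ_succ, Nat.add_mod]; rfl

lemma binomParity_sub {R J : ℕ} (h : J ≤ R) : binomParity R (R - J) = binomParity R J := by
  rw [binomParity, Nat.choose_symm h]; rfl

lemma binomParity_add_add {r j : ℕ} (k : ℕ) (h : j ≤ r) :
    binomParity (r + k) (j + k) = binomParity (r + k) (r - j) := by
  rw [← binomParity_sub (show r - j ≤ r + k by omega), show r + k - (r - j) = j + k by omega]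

lemma binomParity_of_lt {R J : ℕ} (h : R < J) : binomParity R J = 0 := by
  rw [binomParity, Nat.choose_eq_zero_of_lt h]

lemma binomParity_self (R : ℕ) : binomParity R R = 1 := by
  rw [binomParity, Nat.choose_self]

lemma binomParity_eq_mul_halves (R J : ℕ) :
    binomParity R J = binomParity (R % 2) (J % 2) * binomParity (R / 2) (J / 2) % 2 := by
  have := @Choose.choose_modEq_choose_mod_mul_choose_div_nat R J 2 ⟨Nat.prime_two⟩
  rw [binomParity, this, Nat.mul_mod]; rfl

lemma binomParity_two_mul_two_mul_add_one (a b : ℕ) :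
    binomParity (2 * a) (2 * b + 1) = 0 := by
  rw [binomParity_eq_mul_halves]; simp [binomParity]

lemma binomParity_two_mul_two_mul (a b : ℕ) : binomParity (2 * a) (2 * b) = binomParity a b := by
  rw [binomParity_eq_mul_halves]; simp [binomParity]

lemma binomParity_two_mul_add_one (a J : ℕ) :
    binomParity (2 * a + 1) J = binomParity a (J / 2) := by
  rw [binomParity_eq_mul_halves]
  rcases Nat.mod_two_eq_zero_or_one J with h | h <;> simp [h, binomParity, Nat.mul_add_div]

lemma binomParity_two_pow_add {t x y : ℕ} (hx : x < 2 ^ t) (hy : y < 2 ^ t) :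
    binomParity (2 ^ t + x) y = binomParity x y := by
  induction t generalizing x y with
  | zero =>
    obtain rfl : x = 0 := by omega
    obtain rfl : y = 0 := by omega
    rfl
  | succ t ih =>
    rw [pow_succ] at hx hy
    rw [binomParity_eq_mul_halves, pow_succ, show (2 ^ t * 2 + x) % 2 = x % 2 by omega,
      show (2 ^ t * 2 + x) / 2 = 2 ^ t + x / 2 by omega, ih (by omega) (by omega),
      ← binomParity_eq_mul_halves]

lemma binomParity_two_pow_sub_one {t y : ℕ} (hy : y < 2 ^ t) :
    binomParity (2 ^ t - 1) y = 1 := by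
  induction t generalizing y with
  | zero =>
    obtain rfl : y = 0 := by omega
    rfl
  | succ t ih =>
    rw [pow_succ] at hy
    have h1 : 1 ≤ 2 ^ t := Nat.one_le_two_pow
    rw [pow_succ, show 2 ^ t * 2 - 1 = 2 * (2 ^ t - 1) + 1 by omega,
      binomParity_two_mul_add_one, ih (by omega)]

section LocalRules

variable {R J : ℕ}

lemma binomParity_succ_of_even (hR : R % 2 = 0) (hJ : J % 2 = 0) :
    binomParity (R + 1) J = binomParity R J := by
  obtain ⟨a, rfl⟩ : ∃ a, R = 2 * a := ⟨R / 2, by omega⟩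
  obtain ⟨b, rfl⟩ : ∃ b, J = 2 * b := ⟨J / 2, by omega⟩
  rw [binomParity_two_mul_add_one, binomParity_two_mul_two_mul,
    Nat.mul_div_cancel_left _ two_pos]

lemma col_even_of_even_row (hR : R % 2 = 0) (h : binomParity R J = 1) : J % 2 = 0 := by
  obtain ⟨a, rfl⟩ : ∃ a, R = 2 * a := ⟨R / 2, by omega⟩
  by_contra hJ
  rw [show J = 2 * (J / 2) + 1 by omega, binomParity_two_mul_two_mul_add_one] at h
  exact zero_ne_one h

lemma row_odd_of_descent (h1 : binomParity R J = 1) (h0 : binomParity (R + 1) J = 0) :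
    R % 2 = 1 := by
  by_contra hR
  have hJ := col_even_of_even_row (by omega) h1
  rw [binomParity_succ_of_even (by omega) hJ] at h0
  omega

lemma col_even_of_two_ones (h1 : binomParity R J = 1) (h2 : binomParity (R + 1) J = 1) :
    J % 2 = 0 := by
  rcases Nat.mod_two_eq_zero_or_one R with hR | hR
  · exact col_even_of_even_row hR h1
  · exact col_even_of_even_row (by omega) h2

lemma col_parity_of_ascent (h0 : binomParity R J = 0) (h1 : binomParity (R + 1) J = 1) :
    J % 2 = (R + 1) % 2 := by
  rcases Nat.mod_two_eq_zero_or_one R with hR | hR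
  · by_contra hJ
    rw [binomParity_succ_of_even hR (by omega)] at h1
    omega
  · rw [col_even_of_even_row (by omega) h1]
    omega

/-- Below an even row `R`, the symmetry `J ↔ R - J` of row `R` persists on the even columns of
row `R + 1`. -/
lemma col_odd_of_succ_asymm (hR : R % 2 = 0) (hJR : J ≤ R) (h1 : binomParity (R + 1) J = 1)
    (h0 : binomParity (R + 1) (R - J) = 0) : J % 2 = 1 := by
  by_contra hJ
  rw [binomParity_succ_of_even hR (by omega), binomParity_sub hJR,
    ← binomParity_succ_of_even hR (by omega)] at h0
  omega

end LocalRules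

lemma binomParity_eq_of_edges_eq {n r j r' j' : ℕ}
    (hl : ∀ k, 1 ≤ k → k < n → binomParity (r + k) j = binomParity (r' + k) j')
    (hr : ∀ k, 1 ≤ k → k < n → binomParity (r + k) (j + k) = binomParity (r' + k) (j' + k))
    {k : ℕ} (hk : 1 ≤ k) (hkn : k < n) {i : ℕ} (hi : i ≤ k) :
    binomParity (r + k) (j + i) = binomParity (r' + k) (j' + i) := by
  induction k, hk using Nat.le_induction generalizing i with
  | base =>
    rcases Nat.le_one_iff_eq_zero_or_eq_one.mp hi with rfl | rfl
    · exact hl 1 le_rfl hkn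
    · exact hr 1 le_rfl hkn
  | succ k hk ih =>
    rcases Nat.eq_zero_or_pos i with rfl | hi0
    · exact hl (k + 1) (by omega) hkn
    rcases hi.eq_or_lt with rfl | hik
    · exact hr (k + 1) (by omega) hkn
    obtain ⟨i, rfl⟩ : ∃ i', i = i' + 1 := ⟨i - 1, by omega⟩
    rw [← add_assoc, ← add_assoc, ← add_assoc, ← add_assoc, binomParity_succ_succ,
      binomParity_succ_succ, ih (by omega) (by omega), add_assoc, add_assoc,
      ih (by omega) (by omega)]

lemma filled_two_mul (R J : ℕ) : filled R (2 * J) = decide (binomParity R J = 1) :=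
  decide_eq_decide.mpr (by simp [binomParity])

lemma filled_of_odd {R c : ℕ} (hc : c % 2 = 1) : filled R c = false := by
  simp [filled, hc]

/-- Column `J` of Pascal's triangle mod 2 along the rows `r + 1, …, r + n - 1`, extended by zero:
the top-cut pattern of size `n` at `(r, 2 * j)` has left edge `cutEdge n r j` and right edge
`cutEdge n r (r - j)`. -/
def cutEdge (n r J k : ℕ) : ℕ := if 1 ≤ k ∧ k < n then binomParity (r + k) J else 0

section CutEdge

variable {n r J k : ℕ}

lemma cutEdge_le_one : cutEdge n r J k ≤ 1 := by
  unfold cutEdge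
  split_ifs
  · exact binomParity_le_one _ _
  · exact zero_le_one

lemma cutEdge_of_mem (hk : 1 ≤ k) (hkn : k < n) : cutEdge n r J k = binomParity (r + k) J :=
  if_pos ⟨hk, hkn⟩

lemma mem_of_cutEdge_ne_zero (h : cutEdge n r J k ≠ 0) : 1 ≤ k ∧ k < n := by
  by_contra hk
  exact h (if_neg hk)

lemma binomParity_of_cutEdge_eq_one (h : cutEdge n r J k = 1) : binomParity (r + k) J = 1 := by
  obtain ⟨hk, hkn⟩ := mem_of_cutEdge_ne_zero (n := n) (h.symm ▸ one_ne_zero)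
  rwa [cutEdge_of_mem hk hkn] at h

lemma topCutPattern_apply_left (j : ℕ) :
    topCutPattern n r (2 * j) (k, 0) = decide (cutEdge n r j k = 1) := by
  unfold topCutPattern cutEdge
  by_cases hk : 1 ≤ k ∧ k < n
  · simp [hk, filled_two_mul]
  · simp [hk]

lemma topCutPattern_apply_right {j : ℕ} (hj : j ≤ r) :
    topCutPattern n r (2 * j) (k, 2 * k) = decide (cutEdge n r (r - j) k = 1) := by
  unfold topCutPattern cutEdge
  by_cases hk : 1 ≤ k ∧ k < n
  · simp [hk, ← mul_add, filled_two_mul, binomParity_add_add k hj]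
  · simp [hk]

end CutEdge

theorem topCutPattern_eq_iff {n r j r' j' : ℕ} (hj : j ≤ r) (hj' : j' ≤ r') :
    topCutPattern n r (2 * j) = topCutPattern n r' (2 * j') ↔
      cutEdge n r j = cutEdge n r' j' ∧ cutEdge n r (r - j) = cutEdge n r' (r' - j') := by
  have decide_inj : ∀ {x y : ℕ}, x ≤ 1 → y ≤ 1 → decide (x = 1) = decide (y = 1) → x = y :=
    fun hx hy h => by rw [decide_eq_decide] at h; omega
  constructor
  · intro h
    refine ⟨funext fun k => ?_, funext fun k => ?_⟩
    · have := congrFun h (k, 0)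
      rw [topCutPattern_apply_left, topCutPattern_apply_left] at this
      exact decide_inj cutEdge_le_one cutEdge_le_one this
    · have := congrFun h (k, 2 * k)
      rw [topCutPattern_apply_right hj, topCutPattern_apply_right hj'] at this
      exact decide_inj cutEdge_le_one cutEdge_le_one this
  · rintro ⟨hl, hr⟩
    funext ⟨k, m⟩
    unfold topCutPattern
    split_ifs with hkm
    · obtain ⟨hk, hkn, hm⟩ := hkm
      rcases Nat.even_or_odd' m with ⟨i, rfl | rfl⟩
      · rw [← mul_add, ← mul_add, filled_two_mul, filled_two_mul,
          binomParity_eq_of_edges_eq (i := i) (fun k hk hkn => ?_) (fun k hk hkn => ?_) hk hkn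
            (by omega)]
        · rw [← cutEdge_of_mem hk hkn, hl, cutEdge_of_mem hk hkn]
        · rw [binomParity_add_add k hj, binomParity_add_add k hj', ← cutEdge_of_mem hk hkn, hr,
            cutEdge_of_mem hk hkn]
      · rw [filled_of_odd (by omega), filled_of_odd (by omega)]
    · rfl

section EdgeRules

variable {n r J k : ℕ} {s : ℕ → ℕ}

lemma col_even_of_cutEdge_two_ones (hs : cutEdge n r J = s) (h1 : s k = 1)
    (h2 : s (k + 1) = 1) : J % 2 = 0 := by
  subst hs
  have h2' := binomParity_of_cutEdge_eq_one h2
  rw [← add_assoc] at h2'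
  exact col_even_of_two_ones (binomParity_of_cutEdge_eq_one h1) h2'

lemma col_parity_of_cutEdge_ascent (hs : cutEdge n r J = s) (hk : 1 ≤ k) (h0 : s k = 0)
    (h1 : s (k + 1) = 1) : J % 2 = (r + k + 1) % 2 := by
  subst hs
  have hkn := (mem_of_cutEdge_ne_zero (h1.symm ▸ one_ne_zero)).2
  have h1' := binomParity_of_cutEdge_eq_one h1
  rw [← add_assoc] at h1'
  rw [cutEdge_of_mem hk (by omega)] at h0
  exact col_parity_of_ascent h0 h1'

lemma col_even_of_cutEdge_even_row (hs : cutEdge n r J = s) (h1 : s k = 1)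
    (hr : (r + k) % 2 = 0) : J % 2 = 0 := by
  subst hs
  exact col_even_of_even_row hr (binomParity_of_cutEdge_eq_one h1)

lemma col_parity_of_cutEdge_odd_row (hs : cutEdge n r J = s) (hk : 1 ≤ k) (h1 : s (k + 1) = 1)
    (hr : (r + k) % 2 = 0) : J % 2 = 1 - s k := by
  rcases Nat.le_one_iff_eq_zero_or_eq_one.mp (hs ▸ cutEdge_le_one : s k ≤ 1) with h | h
  · rw [col_parity_of_cutEdge_ascent hs hk h h1, h]; omega
  · rw [col_even_of_cutEdge_two_ones hs h h1, h]

lemma col_odd_of_cutEdge_asymm (hr : r % 2 = 0) (hJ : J ≤ r) (h1 : cutEdge n r J 1 = 1)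
    (h0 : cutEdge n r (r - J) 1 = 0) : J % 2 = 1 := by
  have hn := (mem_of_cutEdge_ne_zero (h1.symm ▸ one_ne_zero)).2
  rw [cutEdge_of_mem le_rfl hn] at h0 h1
  exact col_odd_of_succ_asymm hr hJ h1 h0

end EdgeRules

def RowMarker (n : ℕ) (s : ℕ → ℕ) (k : ℕ) : Prop :=
  (k + 1 < n ∧ s k = 1 ∧ s (k + 1) = 0) ∨ (1 ≤ k ∧ s k = 0 ∧ s (k + 1) = 1 ∧ s (k + 2) = 1)

lemma row_odd_of_rowMarker {n r J k : ℕ} {s : ℕ → ℕ} (hs : cutEdge n r J = s)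
    (h : RowMarker n s k) : (r + k) % 2 = 1 := by
  rcases h with ⟨hkn, h1, h0⟩ | ⟨hk, h0, h1, h2⟩
  · subst hs
    rw [cutEdge_of_mem (by omega) hkn] at h0
    exact row_odd_of_descent (binomParity_of_cutEdge_eq_one h1) h0
  · have := col_parity_of_cutEdge_ascent hs hk h0 h1
    have := col_even_of_cutEdge_two_ones hs h1 h2
    omega

lemma eq_single_of_forall_ne {i : ℕ} {s : ℕ → ℕ} (h : ∀ k, k ≠ i → s k = 0) :
    s = Pi.single i (s i) := by
  funext k
  by_cases hk : k = i
  · subst hk; simp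
  · simp [hk, h k hk]

lemma eq_zero_or_eq_single {i : ℕ} {s : ℕ → ℕ} (hle : ∀ k, s k ≤ 1) (h : ∀ k, s k = 1 → k = i) :
    s = 0 ∨ s = Pi.single i 1 := by
  rw [eq_single_of_forall_ne (i := i) (s := s) fun k hk => by
    have := hle k
    by_contra h0
    exact hk (h k (by omega))]
  rcases Nat.le_one_iff_eq_zero_or_eq_one.mp (hle i) with h | h <;> simp [h]

lemma rowMarker_or_shape {n : ℕ} {s : ℕ → ℕ} (hle : ∀ k, s k ≤ 1)
    (hsupp : ∀ k, s k ≠ 0 → 1 ≤ k ∧ k < n) :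
    (∃ k, RowMarker n s k) ∨ (∀ k, 1 ≤ k → k < n → s k = 1) ∨
      s = Pi.single (n - 1) (s (n - 1)) := by
  by_cases hm : ∃ k, RowMarker n s k
  · exact Or.inl hm
  simp only [not_exists] at hm
  have hup : ∀ k, k + 1 < n → s k = 1 → s (k + 1) = 1 := fun k hkn h1 => by
    have := hle (k + 1)
    by_contra h0
    exact hm k (Or.inl ⟨hkn, h1, by omega⟩)
  rcases Nat.le_one_iff_eq_zero_or_eq_one.mp (hle 1) with h | h
  · have hzero : ∀ k, 1 ≤ k → k + 2 ≤ n → s k = 0 := by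
      intro k hk
      induction k, hk using Nat.le_induction with
      | base => exact fun _ => h
      | succ k hk ih =>
        intro hkn
        have := hle (k + 1)
        by_contra h1
        exact hm k (Or.inr ⟨hk, ih (by omega), by omega, hup (k + 1) (by omega) (by omega)⟩)
    refine Or.inr (Or.inr (eq_single_of_forall_ne fun k hk => ?_))
    by_contra h0
    have := hsupp k h0
    exact h0 (hzero k this.1 (by omega))
  · refine Or.inr (Or.inl fun k hk hkn => ?_)
    induction k, hk using Nat.le_induction with
    | base => exact h
    | succ k hk ih => exact hup k hkn (ih (by omega))

/-- The edge pairs of the blank top-cut pattern, of the one filled exactly in its first row and of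
the two filled exactly at one bottom corner. -/
def IsSpecialEdges (n : ℕ) (a b : ℕ → ℕ) : Prop :=
  (a = 0 ∧ b = 0) ∨ (a = Pi.single 1 1 ∧ b = Pi.single 1 1) ∨
    (a = Pi.single (n - 1) 1 ∧ b = 0) ∨ (a = 0 ∧ b = Pi.single (n - 1) 1)

lemma isSpecialEdges_two (r J J' : ℕ) : IsSpecialEdges 2 (cutEdge 2 r J) (cutEdge 2 r J') := by
  have h1 : ∀ J k, cutEdge 2 r J k = 1 → k = 1 := fun J k h => by
    have := mem_of_cutEdge_ne_zero (h.symm ▸ one_ne_zero : cutEdge 2 r J k ≠ 0)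
    omega
  unfold IsSpecialEdges
  rcases eq_zero_or_eq_single (fun _ => cutEdge_le_one) (h1 J) with ha | ha <;>
    rcases eq_zero_or_eq_single (fun _ => cutEdge_le_one) (h1 J') with hb | hb <;> simp_all

section RowParity

variable {n R J : ℕ} {a b : ℕ → ℕ}

lemma row_even_of_two_ones (hJ : J ≤ R) (hRa : cutEdge n R J = a)
    (hRb : cutEdge n R (R - J) = b) (ha1 : a 1 = 1) (ha2 : a 2 = 1) (hb1 : b 1 = 1)
    (hb2 : b 2 = 1) : R % 2 = 0 := by
  have := col_even_of_cutEdge_two_ones hRa ha1 ha2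
  have := col_even_of_cutEdge_two_ones hRb hb1 hb2
  omega

lemma row_odd_of_two_ones_of_zero (hJ : J ≤ R) (hRa : cutEdge n R J = a)
    (hRb : cutEdge n R (R - J) = b) (ha1 : a 1 = 1) (ha2 : a 2 = 1) (hb1 : b 1 = 0) :
    R % 2 = 1 := by
  have := col_even_of_cutEdge_two_ones hRa ha1 ha2
  by_contra hR
  have := col_odd_of_cutEdge_asymm (by omega) hJ (hRa ▸ ha1) (hRb ▸ hb1)
  omega

lemma exists_row_parity_of_singles (hn : 2 < n) (hns : ¬ IsSpecialEdges n a b)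
    (hla : ∀ k, a k ≤ 1) (hlb : ∀ k, b k ≤ 1) (hA : a = Pi.single (n - 1) (a (n - 1)))
    (hB : b = Pi.single (n - 1) (b (n - 1))) :
    ∃ c, ∀ R J, J ≤ R → cutEdge n R J = a → cutEdge n R (R - J) = b → R % 2 = c := by
  have hprev : ∀ v : ℕ, (Pi.single (n - 1) v : ℕ → ℕ) (n - 2) = 0 := fun v => by
    rw [Pi.single_apply, if_neg (by omega)]
  have hlast : n - 2 + 1 = n - 1 := by omega
  rcases Nat.le_one_iff_eq_zero_or_eq_one.mp (hla (n - 1)) with hv | hv <;>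
    rcases Nat.le_one_iff_eq_zero_or_eq_one.mp (hlb (n - 1)) with hw | hw <;>
    simp only [hv, hw, Pi.single_zero] at hA hB
  · exact absurd (Or.inl ⟨hA, hB⟩) hns
  · exact absurd (Or.inr (Or.inr (Or.inr ⟨hA, hB⟩))) hns
  · exact absurd (Or.inr (Or.inr (Or.inl ⟨hA, hB⟩))) hns
  · refine ⟨0, fun R J hJ hRa hRb => ?_⟩
    have := col_parity_of_cutEdge_ascent hRa (k := n - 2) (by omega) (by rw [hA, hprev])
      (by rw [hlast]; exact hv)
    have := col_parity_of_cutEdge_ascent hRb (k := n - 2) (by omega) (by rw [hB, hprev])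
      (by rw [hlast]; exact hw)
    omega

end RowParity

theorem row_parity_eq {n r j r' j' : ℕ} (hn : 2 ≤ n) (hj : j ≤ r) (hj' : j' ≤ r')
    (ha : cutEdge n r' j' = cutEdge n r j) (hb : cutEdge n r' (r' - j') = cutEdge n r (r - j))
    (hns : ¬ IsSpecialEdges n (cutEdge n r j) (cutEdge n r (r - j))) : r' % 2 = r % 2 := by
  rcases hn.eq_or_lt with rfl | hn
  · exact absurd (isSpecialEdges_two r j (r - j)) hns
  set a := cutEdge n r j
  set b := cutEdge n r (r - j)
  suffices h : ∃ c, ∀ R J, J ≤ R → cutEdge n R J = a → cutEdge n R (R - J) = b → R % 2 = c by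
    obtain ⟨c, hc⟩ := h
    rw [hc r' j' hj' ha hb, hc r j hj rfl rfl]
  by_cases hmA : ∃ k, RowMarker n a k
  · obtain ⟨k, hk⟩ := hmA
    exact ⟨(k + 1) % 2, fun R J _ hRa _ => by have := row_odd_of_rowMarker hRa hk; omega⟩
  by_cases hmB : ∃ k, RowMarker n b k
  · obtain ⟨k, hk⟩ := hmB
    exact ⟨(k + 1) % 2, fun R J _ _ hRb => by have := row_odd_of_rowMarker hRb hk; omega⟩
  have hla : ∀ k, a k ≤ 1 := fun _ => cutEdge_le_one
  have hlb : ∀ k, b k ≤ 1 := fun _ => cutEdge_le_one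
  have hsingle : ∀ v : ℕ, (Pi.single (n - 1) v : ℕ → ℕ) 1 = 0 := fun v => by
    rw [Pi.single_apply, if_neg (by omega)]
  rcases (rowMarker_or_shape hla fun _ => mem_of_cutEdge_ne_zero).resolve_left hmA with hA | hA <;>
    rcases (rowMarker_or_shape hlb fun _ => mem_of_cutEdge_ne_zero).resolve_left hmB with hB | hB
  · exact ⟨0, fun R J hJ hRa hRb => row_even_of_two_ones hJ hRa hRb (hA 1 le_rfl (by omega))
      (hA 2 (by omega) hn) (hB 1 le_rfl (by omega)) (hB 2 (by omega) hn)⟩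
  · exact ⟨1, fun R J hJ hRa hRb => row_odd_of_two_ones_of_zero hJ hRa hRb
      (hA 1 le_rfl (by omega)) (hA 2 (by omega) hn) (by rw [hB, hsingle])⟩
  · exact ⟨1, fun R J hJ hRa hRb => row_odd_of_two_ones_of_zero (Nat.sub_le R J) hRb
      (by rw [Nat.sub_sub_self hJ, hRa]) (hB 1 le_rfl (by omega)) (hB 2 (by omega) hn)
      (by rw [hA, hsingle])⟩
  · exact exists_row_parity_of_singles hn hns hla hlb hA hB

lemma exists_col_parity_of_one {n c k : ℕ} {s : ℕ → ℕ} (h1 : s k = 1)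
    (hk : 2 ≤ k ∨ (c + k) % 2 = 0) : ∃ d, ∀ R J, R % 2 = c → cutEdge n R J = s → J % 2 = d := by
  rcases Nat.mod_two_eq_zero_or_one (c + k) with hck | hck
  · exact ⟨0, fun R J hR hs => col_even_of_cutEdge_even_row hs h1 (by omega)⟩
  · obtain ⟨m, rfl⟩ : ∃ m, k = m + 1 := ⟨k - 1, by omega⟩
    exact ⟨1 - s m, fun R J hR hs => col_parity_of_cutEdge_odd_row hs (by omega) h1 (by omega)⟩

theorem col_parity_eq {n r j r' j' : ℕ} (hj : j ≤ r) (hj' : j' ≤ r')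
    (ha : cutEdge n r' j' = cutEdge n r j) (hb : cutEdge n r' (r' - j') = cutEdge n r (r - j))
    (hns : ¬ IsSpecialEdges n (cutEdge n r j) (cutEdge n r (r - j))) (hr : r' % 2 = r % 2) :
    j' % 2 = j % 2 := by
  set a := cutEdge n r j
  set b := cutEdge n r (r - j)
  suffices h : ∃ d, ∀ R J, J ≤ R → R % 2 = r % 2 → cutEdge n R J = a → cutEdge n R (R - J) = b →
      J % 2 = d by
    obtain ⟨d, hd⟩ := h
    rw [hd r' j' hj' hr ha hb, hd r j hj rfl rfl rfl]
  by_cases hA : ∃ k, a k = 1 ∧ (2 ≤ k ∨ (r % 2 + k) % 2 = 0)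
  · obtain ⟨k, h1, hk⟩ := hA
    obtain ⟨d, hd⟩ := exists_col_parity_of_one (n := n) h1 hk
    exact ⟨d, fun R J _ hR hRa _ => hd R J hR hRa⟩
  by_cases hB : ∃ k, b k = 1 ∧ (2 ≤ k ∨ (r % 2 + k) % 2 = 0)
  · obtain ⟨k, h1, hk⟩ := hB
    obtain ⟨d, hd⟩ := exists_col_parity_of_one (n := n) h1 hk
    exact ⟨(r % 2 + d) % 2, fun R J hJ hR _ hRb => by have := hd R (R - J) hR hRb; omega⟩
  have hA1 : ∀ k, a k = 1 → k = 1 ∧ r % 2 = 0 := fun k h1 => by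
    have := mem_of_cutEdge_ne_zero (h1.symm ▸ one_ne_zero : a k ≠ 0)
    exact by_contra fun h => hA ⟨k, h1, by omega⟩
  have hB1 : ∀ k, b k = 1 → k = 1 ∧ r % 2 = 0 := fun k h1 => by
    have := mem_of_cutEdge_ne_zero (h1.symm ▸ one_ne_zero : b k ≠ 0)
    exact by_contra fun h => hB ⟨k, h1, by omega⟩
  rcases eq_zero_or_eq_single (s := a) (fun _ => cutEdge_le_one) (fun k h => (hA1 k h).1)
      with hA | hA <;>
    rcases eq_zero_or_eq_single (s := b) (fun _ => cutEdge_le_one) (fun k h => (hB1 k h).1)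
      with hB | hB
  · exact absurd (Or.inl ⟨hA, hB⟩) hns
  · have hr0 := (hB1 1 (by rw [hB]; simp)).2
    refine ⟨1, fun R J hJ hR hRa hRb => ?_⟩
    have := col_odd_of_cutEdge_asymm (J := R - J) (by omega) (Nat.sub_le R J)
      (by rw [hRb, hB]; simp) (by rw [Nat.sub_sub_self hJ, hRa, hA]; rfl)
    omega
  · have hr0 := (hA1 1 (by rw [hA]; simp)).2
    exact ⟨1, fun R J hJ hR hRa hRb => col_odd_of_cutEdge_asymm (by omega) hJ
      (by rw [hRa, hA]; simp) (by rw [hRb, hB]; rfl)⟩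
  · exact absurd (Or.inr (Or.inl ⟨hA, hB⟩)) hns

theorem phase_eq_of_topCutPattern_eq {n r j r' j' : ℕ} (hn : 2 ≤ n) (hj : j ≤ r) (hj' : j' ≤ r')
    (h : topCutPattern n r' (2 * j') = topCutPattern n r (2 * j))
    (hns : ¬ IsSpecialEdges n (cutEdge n r j) (cutEdge n r (r - j))) :
    r' % 2 = r % 2 ∧ j' % 2 = j % 2 := by
  obtain ⟨ha, hb⟩ := (topCutPattern_eq_iff hj' hj).mp h
  have hr := row_parity_eq hn hj hj' ha hb hns
  exact ⟨hr, col_parity_eq hj hj' ha hb hns hr⟩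

section Witnesses

variable {n t x y : ℕ}

lemma cutEdge_two_pow_add_eq_zero (hxy : x + n ≤ y) (hy : y < 2 ^ t) :
    cutEdge n (2 ^ t + x) y = 0 := by
  funext k
  rw [Pi.zero_apply]
  unfold cutEdge
  split_ifs with hk
  · rw [add_assoc, binomParity_two_pow_add (by omega) hy, binomParity_of_lt (by omega)]
  · rfl

lemma cutEdge_two_pow_add_eq_single (hn : 2 ≤ n) (hx : x + n ≤ 2 ^ t) :
    cutEdge n (2 ^ t + x) (x + n - 1) = Pi.single (n - 1) 1 := by
  funext k
  unfold cutEdge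
  rw [Pi.single_apply]
  split_ifs with hk hkn hkn
  · rw [add_assoc, binomParity_two_pow_add (by omega) (by omega), hkn,
      show x + (n - 1) = x + n - 1 by omega, binomParity_self]
  · rw [add_assoc, binomParity_two_pow_add (by omega) (by omega), binomParity_of_lt (by omega)]
  · omega
  · rfl

lemma cutEdge_two_pow_sub_two (hn : 2 ≤ n) (hy : n ≤ y + 2) (hy' : y + 2 ≤ 2 ^ t) :
    cutEdge n (2 ^ t - 2) y = Pi.single 1 1 := by
  funext k
  unfold cutEdge
  rw [Pi.single_apply]
  split_ifs with hk hk1 hk1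
  · rw [hk1, show 2 ^ t - 2 + 1 = 2 ^ t - 1 by omega, binomParity_two_pow_sub_one (by omega)]
  · rw [show 2 ^ t - 2 + k = 2 ^ t + (k - 2) by omega,
      binomParity_two_pow_add (by omega) (by omega), binomParity_of_lt (by omega)]
  · omega
  · rfl

end Witnesses

/-- The blank top-cut pattern; like the next three, it is given by a position where it occurs. -/
def blankTopCut (n : ℕ) : ℕ × ℕ → Bool := topCutPattern n (2 ^ (n + 2) + 2) (2 * 2 ^ (n + 1))

/-- The top-cut pattern filled exactly in its first row. -/
def apexTopCut (n : ℕ) : ℕ × ℕ → Bool := topCutPattern n (2 ^ (n + 2) - 2) (2 * 2 ^ (n + 1))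

/-- The top-cut pattern filled exactly at its bottom-left corner. -/
def leftCornerTopCut (n : ℕ) : ℕ × ℕ → Bool := topCutPattern n (2 ^ (n + 1)) (2 * (n - 1))

/-- The top-cut pattern filled exactly at its bottom-right corner. -/
def rightCornerTopCut (n : ℕ) : ℕ × ℕ → Bool :=
  topCutPattern n (2 ^ (n + 1)) (2 * (2 ^ (n + 1) - (n - 1)))

lemma two_pow_facts (n : ℕ) : 2 ^ (n + 1) = 2 * 2 ^ n ∧ 2 ^ (n + 2) = 4 * 2 ^ n ∧ n < 2 ^ n :=
  ⟨by ring, by ring, Nat.lt_two_pow_self⟩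

section Specials

variable {n r j : ℕ}

lemma topCutPattern_eq_blankTopCut_iff (hn : 2 ≤ n) (hj : j ≤ r) :
    topCutPattern n r (2 * j) = blankTopCut n ↔ cutEdge n r j = 0 ∧ cutEdge n r (r - j) = 0 := by
  obtain ⟨h1, h2, h3⟩ := two_pow_facts n
  have hw : 2 ^ (n + 1) ≤ 2 ^ (n + 2) + 2 := by omega
  rw [blankTopCut, topCutPattern_eq_iff hj hw,
    cutEdge_two_pow_add_eq_zero (n := n) (t := n + 2) (x := 2) (y := 2 ^ (n + 1)) (by omega)
      (by omega),
    show 2 ^ (n + 2) + 2 - 2 ^ (n + 1) = 2 ^ (n + 1) + 2 by omega,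
    cutEdge_two_pow_add_eq_zero (n := n) (t := n + 2) (x := 2) (y := 2 ^ (n + 1) + 2) (by omega)
      (by omega)]

lemma topCutPattern_eq_apexTopCut_iff (hn : 2 ≤ n) (hj : j ≤ r) :
    topCutPattern n r (2 * j) = apexTopCut n ↔
      cutEdge n r j = Pi.single 1 1 ∧ cutEdge n r (r - j) = Pi.single 1 1 := by
  obtain ⟨h1, h2, h3⟩ := two_pow_facts n
  have hw : 2 ^ (n + 1) ≤ 2 ^ (n + 2) - 2 := by omega
  rw [apexTopCut, topCutPattern_eq_iff hj hw, cutEdge_two_pow_sub_two hn (by omega) (by omega),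
    cutEdge_two_pow_sub_two hn (by omega) (by omega)]

lemma topCutPattern_eq_leftCornerTopCut_iff (hn : 2 ≤ n) (hj : j ≤ r) :
    topCutPattern n r (2 * j) = leftCornerTopCut n ↔
      cutEdge n r j = Pi.single (n - 1) 1 ∧ cutEdge n r (r - j) = 0 := by
  obtain ⟨h1, h2, h3⟩ := two_pow_facts n
  have hw : n - 1 ≤ 2 ^ (n + 1) := by omega
  have hl := cutEdge_two_pow_add_eq_single (t := n + 1) (x := 0) hn (by omega)
  have hr := cutEdge_two_pow_add_eq_zero (n := n) (t := n + 1) (x := 0)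
    (y := 2 ^ (n + 1) - (n - 1)) (by omega) (by omega)
  rw [add_zero, zero_add] at hl
  rw [add_zero] at hr
  rw [leftCornerTopCut, topCutPattern_eq_iff hj hw, hl, hr]

lemma topCutPattern_eq_rightCornerTopCut_iff (hn : 2 ≤ n) (hj : j ≤ r) :
    topCutPattern n r (2 * j) = rightCornerTopCut n ↔
      cutEdge n r j = 0 ∧ cutEdge n r (r - j) = Pi.single (n - 1) 1 := by
  obtain ⟨h1, h2, h3⟩ := two_pow_facts n
  have hw : 2 ^ (n + 1) - (n - 1) ≤ 2 ^ (n + 1) := Nat.sub_le _ _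
  have hl := cutEdge_two_pow_add_eq_single (t := n + 1) (x := 0) hn (by omega)
  have hr := cutEdge_two_pow_add_eq_zero (n := n) (t := n + 1) (x := 0)
    (y := 2 ^ (n + 1) - (n - 1)) (by omega) (by omega)
  rw [add_zero, zero_add] at hl
  rw [add_zero] at hr
  rw [rightCornerTopCut, topCutPattern_eq_iff hj hw, Nat.sub_sub_self (by omega), hl, hr]

end Specials

lemma mem_PtopCut_iff {n : ℕ} {p : ℕ × ℕ → Bool} :
    p ∈ PtopCut n ↔ ∃ r j, j ≤ r ∧ p = topCutPattern n r (2 * j) := by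
  constructor
  · rintro ⟨r, c, hc, hcr, rfl⟩
    exact ⟨r, c / 2, by omega, by rw [Nat.mul_div_cancel' (Nat.dvd_of_mod_eq_zero hc)]⟩
  · rintro ⟨r, j, hj, rfl⟩
    exact ⟨r, 2 * j, by omega, by omega, rfl⟩

lemma mem_PtopCutRC_iff {n ρ γ : ℕ} {p : ℕ × ℕ → Bool} :
    p ∈ PtopCutRC n ρ γ ↔
      ∃ r j, j ≤ r ∧ r % 2 = ρ ∧ 2 * (j % 2) = γ ∧ p = topCutPattern n r (2 * j) := by
  constructor
  · rintro ⟨r, c, hc, hcr, hr, hcγ, rfl⟩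
    exact ⟨r, c / 2, by omega, hr, by omega,
      by rw [Nat.mul_div_cancel' (Nat.dvd_of_mod_eq_zero hc)]⟩
  · rintro ⟨r, j, hj, hr, hjγ, rfl⟩
    exact ⟨r, 2 * j, by omega, by omega, hr, by omega, rfl⟩

lemma PtopCutRC_subset (n ρ γ : ℕ) : PtopCutRC n ρ γ ⊆ PtopCut n :=
  fun _ ⟨r, c, hc, hcr, _, _, hp⟩ => ⟨r, c, hc, hcr, hp⟩

lemma row_even_of_apex_edges {n r j : ℕ} (hj : j ≤ r) (ha : cutEdge n r j 1 = 1)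
    (hb : cutEdge n r (r - j) 1 = 1) : r % 2 = 0 := by
  by_contra hr
  have := col_even_of_cutEdge_even_row rfl ha (by omega)
  have := col_even_of_cutEdge_even_row rfl hb (by omega)
  omega

lemma col_parity_of_leftCorner_edges {n r j : ℕ} (hn : 2 ≤ n) (hj : j ≤ r)
    (ha : cutEdge n r j = Pi.single (n - 1) 1) (hb : cutEdge n r (r - j) = 0) :
    j % 2 = (r + n + 1) % 2 := by
  have hlast : cutEdge n r j (n - 1) = 1 := by rw [ha]; simp
  rcases hn.eq_or_lt with rfl | hn
  · rcases Nat.mod_two_eq_zero_or_one r with hr | hr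
    · rw [col_odd_of_cutEdge_asymm hr hj hlast (by rw [hb]; rfl)]; omega
    · rw [col_even_of_cutEdge_even_row rfl hlast (by omega)]; omega
  · rw [col_parity_of_cutEdge_ascent (k := n - 2) rfl (by omega)
      (by rw [ha, Pi.single_apply, if_neg (by omega)])
      (by rw [show n - 2 + 1 = n - 1 by omega]; exact hlast)]
    omega

section Membership

variable {n ρ γ : ℕ}

lemma blankTopCut_mem (hn : 2 ≤ n) (hρ : ρ ≤ 1) (hγ : γ = 0 ∨ γ = 2) :
    blankTopCut n ∈ PtopCutRC n ρ γ := by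
  obtain ⟨h1, h2, h3⟩ := two_pow_facts n
  refine mem_PtopCutRC_iff.mpr ⟨2 ^ (n + 2) + (2 + ρ), 2 ^ (n + 1) + γ / 2, by omega, by omega,
    by omega, ((topCutPattern_eq_blankTopCut_iff hn (by omega)).mpr ⟨?_, ?_⟩).symm⟩
  · exact cutEdge_two_pow_add_eq_zero (by omega) (by omega)
  · exact cutEdge_two_pow_add_eq_zero (by omega) (by omega)

lemma apexTopCut_mem_iff (hn : 2 ≤ n) (hγ : γ = 0 ∨ γ = 2) :
    apexTopCut n ∈ PtopCutRC n ρ γ ↔ ρ = 0 := by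
  obtain ⟨h1, h2, h3⟩ := two_pow_facts n
  constructor
  · rw [mem_PtopCutRC_iff]
    rintro ⟨r, j, hj, rfl, -, hp⟩
    obtain ⟨ha, hb⟩ := (topCutPattern_eq_apexTopCut_iff hn hj).mp hp.symm
    exact row_even_of_apex_edges hj (by rw [ha]; rfl) (by rw [hb]; rfl)
  · rintro rfl
    refine mem_PtopCutRC_iff.mpr ⟨2 ^ (n + 2) - 2, 2 ^ (n + 1) + γ / 2, by omega, by omega,
      by omega, ((topCutPattern_eq_apexTopCut_iff hn (by omega)).mpr ⟨?_, ?_⟩).symm⟩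
    · exact cutEdge_two_pow_sub_two hn (by omega) (by omega)
    · exact cutEdge_two_pow_sub_two hn (by omega) (by omega)

lemma leftCornerTopCut_mem_iff (hn : 2 ≤ n) (hρ : ρ ≤ 1) :
    leftCornerTopCut n ∈ PtopCutRC n ρ γ ↔ γ = 2 * ((ρ + n + 1) % 2) := by
  obtain ⟨h1, h2, h3⟩ := two_pow_facts n
  constructor
  · rw [mem_PtopCutRC_iff]
    rintro ⟨r, j, hj, rfl, rfl, hp⟩
    obtain ⟨ha, hb⟩ := (topCutPattern_eq_leftCornerTopCut_iff hn hj).mp hp.symm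
    rw [col_parity_of_leftCorner_edges hn hj ha hb]
    omega
  · rintro rfl
    refine mem_PtopCutRC_iff.mpr ⟨2 ^ (n + 1) + ρ, ρ + n - 1, by omega, by omega,
      by omega, ((topCutPattern_eq_leftCornerTopCut_iff hn (by omega)).mpr ⟨?_, ?_⟩).symm⟩
    · exact cutEdge_two_pow_add_eq_single hn (by omega)
    · rw [show 2 ^ (n + 1) + ρ - (ρ + n - 1) = 2 ^ (n + 1) - (n - 1) by omega]
      exact cutEdge_two_pow_add_eq_zero (by omega) (by omega)

lemma rightCornerTopCut_mem_iff (hn : 2 ≤ n) (hρ : ρ ≤ 1) :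
    rightCornerTopCut n ∈ PtopCutRC n ρ γ ↔ γ = 2 * ((n + 1) % 2) := by
  obtain ⟨h1, h2, h3⟩ := two_pow_facts n
  constructor
  · rw [mem_PtopCutRC_iff]
    rintro ⟨r, j, hj, rfl, rfl, hp⟩
    obtain ⟨ha, hb⟩ := (topCutPattern_eq_rightCornerTopCut_iff hn hj).mp hp.symm
    have := col_parity_of_leftCorner_edges hn (Nat.sub_le r j) hb (by rw [Nat.sub_sub_self hj, ha])
    omega
  · rintro rfl
    refine mem_PtopCutRC_iff.mpr ⟨2 ^ (n + 1) + ρ, 2 ^ (n + 1) - (n - 1), by omega, by omega,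
      by omega, ((topCutPattern_eq_rightCornerTopCut_iff hn (by omega)).mpr ⟨?_, ?_⟩).symm⟩
    · exact cutEdge_two_pow_add_eq_zero (by omega) (by omega)
    · rw [show 2 ^ (n + 1) + ρ - (2 ^ (n + 1) - (n - 1)) = ρ + n - 1 by omega]
      exact cutEdge_two_pow_add_eq_single hn (by omega)

end Membership

lemma finite_of_eq_false_outside {α : Type*} {P : Set (α → Bool)} {B : Set α} (hB : B.Finite)
    (h : ∀ p ∈ P, ∀ q ∉ B, p q = false) : P.Finite := by
  have := hB.to_subtype
  refine Set.Finite.of_finite_image (f := fun p (q : B) => p q) (Set.toFinite _) ?_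
  intro p hp p' hp' heq
  funext q
  by_cases hq : q ∈ B
  · exact congrFun heq ⟨q, hq⟩
  · rw [h p hp q hq, h p' hp' q hq]

lemma PtopCut_finite (n : ℕ) : (PtopCut n).Finite := by
  refine finite_of_eq_false_outside ((Set.finite_Iio n).prod (Set.finite_Iic (2 * n))) ?_
  rintro p ⟨r, c, -, -, rfl⟩ ⟨k, m⟩ hq
  rw [Set.mem_prod, Set.mem_Iio, Set.mem_Iic] at hq
  exact if_neg fun h => hq ⟨h.2.1, by omega⟩

open Classical in
lemma sum_ncard_eq_sum_card_filter {ι α : Type*} (I : Finset ι) (C : ι → Set α) (T : Finset α)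
    (hC : ∀ i ∈ I, C i ⊆ T) :
    ∑ i ∈ I, (C i).ncard = ∑ p ∈ T, (I.filter fun i => p ∈ C i).card := by
  have hcard : ∀ i ∈ I, (C i).ncard = (T.filter fun p => p ∈ C i).card := fun i hi => by
    rw [← Set.ncard_coe_finset, Finset.coe_filter]
    congr 1
    ext p
    exact ⟨fun hp => ⟨hC i hi hp, hp⟩, fun hp => hp.2⟩
  simp only [Finset.sum_congr rfl hcard, Finset.card_filter]
  exact Finset.sum_comm

lemma sum_add_card_eq_of_eq_one {α : Type*} [DecidableEq α] {T X : Finset α} {m : α → ℕ}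
    (hXT : X ⊆ T) (h : ∀ p ∈ T \ X, m p = 1) :
    ∑ p ∈ T, m p + X.card = T.card + ∑ p ∈ X, m p := by
  rw [← Finset.sum_sdiff hXT, Finset.sum_congr rfl h, Finset.sum_const, smul_eq_mul, mul_one,
    Finset.card_sdiff_of_subset hXT]
  have := Finset.card_le_card hXT
  omega

/-- The four phases `(r % 2, c % 4)` of an upward position `(r, c)`. -/
def phases : Finset (ℕ × ℕ) := {(0, 0), (1, 0), (1, 2), (0, 2)}

lemma mem_phases_iff {i : ℕ × ℕ} : i ∈ phases ↔ i.1 ≤ 1 ∧ (i.2 = 0 ∨ i.2 = 2) := by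
  obtain ⟨ρ, γ⟩ := i
  simp only [phases, Finset.mem_insert, Finset.mem_singleton, Prod.mk.injEq]
  omega

open Classical in
noncomputable def phaseCount (n : ℕ) (p : ℕ × ℕ → Bool) : ℕ :=
  (phases.filter fun i => p ∈ PtopCutRC n i.1 i.2).card

lemma card_filter_phases_graph (f : ℕ → ℕ) (hf : ∀ ρ, f ρ = 0 ∨ f ρ = 2) :
    (phases.filter fun i => i.2 = f i.1).card = 2 := by
  rcases hf 0 with h0 | h0 <;> rcases hf 1 with h1 | h1 <;>
    simp [phases, Finset.filter_insert, Finset.filter_singleton, h0, h1]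

section PhaseCount

variable {n : ℕ}

lemma phaseCount_blankTopCut (hn : 2 ≤ n) : phaseCount n (blankTopCut n) = 4 := by
  classical
  rw [phaseCount, Finset.filter_true_of_mem fun i hi =>
    blankTopCut_mem hn (mem_phases_iff.mp hi).1 (mem_phases_iff.mp hi).2]
  rfl

lemma phaseCount_apexTopCut (hn : 2 ≤ n) : phaseCount n (apexTopCut n) = 2 := by
  classical
  rw [phaseCount, Finset.filter_congr fun i hi => apexTopCut_mem_iff hn (mem_phases_iff.mp hi).2]
  rfl

lemma phaseCount_leftCornerTopCut (hn : 2 ≤ n) : phaseCount n (leftCornerTopCut n) = 2 := by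
  classical
  rw [phaseCount, Finset.filter_congr fun i hi =>
    leftCornerTopCut_mem_iff hn (mem_phases_iff.mp hi).1]
  exact card_filter_phases_graph (fun ρ => 2 * ((ρ + n + 1) % 2)) fun ρ => by omega

lemma phaseCount_rightCornerTopCut (hn : 2 ≤ n) : phaseCount n (rightCornerTopCut n) = 2 := by
  classical
  rw [phaseCount, Finset.filter_congr fun i hi =>
    rightCornerTopCut_mem_iff hn (mem_phases_iff.mp hi).1]
  exact card_filter_phases_graph (fun _ => 2 * ((n + 1) % 2)) fun ρ => by omega

lemma phaseCount_eq_one (hn : 2 ≤ n) {p : ℕ × ℕ → Bool} (hp : p ∈ PtopCut n)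
    (h1 : p ≠ blankTopCut n) (h2 : p ≠ apexTopCut n) (h3 : p ≠ leftCornerTopCut n)
    (h4 : p ≠ rightCornerTopCut n) : phaseCount n p = 1 := by
  classical
  obtain ⟨r, j, hj, rfl⟩ := mem_PtopCut_iff.mp hp
  have hns : ¬ IsSpecialEdges n (cutEdge n r j) (cutEdge n r (r - j)) := by
    rintro (h | h | h | h)
    · exact h1 ((topCutPattern_eq_blankTopCut_iff hn hj).mpr h)
    · exact h2 ((topCutPattern_eq_apexTopCut_iff hn hj).mpr h)
    · exact h3 ((topCutPattern_eq_leftCornerTopCut_iff hn hj).mpr h)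
    · exact h4 ((topCutPattern_eq_rightCornerTopCut_iff hn hj).mpr h)
  rw [phaseCount, Finset.card_eq_one]
  refine ⟨(r % 2, 2 * (j % 2)), Finset.eq_singleton_iff_unique_mem.mpr ⟨?_, ?_⟩⟩
  · exact Finset.mem_filter.mpr ⟨mem_phases_iff.mpr ⟨by omega, by omega⟩,
      mem_PtopCutRC_iff.mpr ⟨r, j, hj, rfl, rfl, rfl⟩⟩
  · rintro ⟨ρ, γ⟩ hi
    obtain ⟨r', j', hj', rfl, rfl, h⟩ := mem_PtopCutRC_iff.mp (Finset.mem_filter.mp hi).2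
    obtain ⟨hr, hj⟩ := phase_eq_of_topCutPattern_eq hn hj hj' h.symm hns
    rw [hr, hj]

end PhaseCount

lemma specialTopCuts_pairwise_ne {n : ℕ} (hn : 2 ≤ n) :
    blankTopCut n ≠ apexTopCut n ∧ blankTopCut n ≠ leftCornerTopCut n ∧
      blankTopCut n ≠ rightCornerTopCut n ∧ apexTopCut n ≠ leftCornerTopCut n ∧
        apexTopCut n ≠ rightCornerTopCut n ∧ leftCornerTopCut n ≠ rightCornerTopCut n := by
  have hl : leftCornerTopCut n ∈ PtopCutRC n 1 (2 * (n % 2)) :=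
    (leftCornerTopCut_mem_iff hn le_rfl).mpr (by omega)
  have hr : rightCornerTopCut n ∈ PtopCutRC n 1 (2 * ((n + 1) % 2)) :=
    (rightCornerTopCut_mem_iff hn le_rfl).mpr rfl
  refine ⟨fun h => ?_, fun h => ?_, fun h => ?_, fun h => ?_, fun h => ?_, fun h => ?_⟩
  · have := (apexTopCut_mem_iff hn (Or.inl rfl)).mp
      (h ▸ blankTopCut_mem (ρ := 1) hn le_rfl (Or.inl rfl))
    omega
  · have := (leftCornerTopCut_mem_iff hn le_rfl).mp
      (h ▸ blankTopCut_mem (ρ := 1) (γ := 2 * ((n + 1) % 2)) hn le_rfl (by omega))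
    omega
  · have := (rightCornerTopCut_mem_iff hn le_rfl).mp
      (h ▸ blankTopCut_mem (ρ := 1) (γ := 2 * (n % 2)) hn le_rfl (by omega))
    omega
  · have := (apexTopCut_mem_iff hn (by omega)).mp (h ▸ hl)
    omega
  · have := (apexTopCut_mem_iff hn (by omega)).mp (h ▸ hr)
    omega
  · have := (rightCornerTopCut_mem_iff hn le_rfl).mp (h ▸ hl)
    omega

lemma sum_phaseCount_eq {n : ℕ} (hn : 2 ≤ n) {T : Finset (ℕ × ℕ → Bool)}
    (hT : (T : Set (ℕ × ℕ → Bool)) = PtopCut n) : ∑ p ∈ T, phaseCount n p = T.card + 6 := by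
  classical
  obtain ⟨d1, d2, d3, d4, d5, d6⟩ := specialTopCuts_pairwise_ne hn
  let X : Finset (ℕ × ℕ → Bool) :=
    {blankTopCut n, apexTopCut n, leftCornerTopCut n, rightCornerTopCut n}
  have hXT : X ⊆ T := by
    intro p hp
    rw [← Finset.mem_coe, hT]
    simp only [X, Finset.mem_insert, Finset.mem_singleton] at hp
    rcases hp with rfl | rfl | rfl | rfl
    · exact PtopCutRC_subset n 0 0 (blankTopCut_mem hn zero_le_one (Or.inl rfl))
    · exact PtopCutRC_subset n 0 0 ((apexTopCut_mem_iff hn (Or.inl rfl)).mpr rfl)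
    · exact PtopCutRC_subset n 0 _ ((leftCornerTopCut_mem_iff hn zero_le_one).mpr rfl)
    · exact PtopCutRC_subset n 0 _ ((rightCornerTopCut_mem_iff hn zero_le_one).mpr rfl)
  have hcount := sum_add_card_eq_of_eq_one (m := phaseCount n) hXT fun p hp => by
    simp only [X, Finset.mem_sdiff, Finset.mem_insert, Finset.mem_singleton, not_or] at hp
    exact phaseCount_eq_one hn (hT ▸ hp.1) hp.2.1 hp.2.2.1 hp.2.2.2.1 hp.2.2.2.2
  rw [Finset.sum_insert (by simp [d1, d2, d3]), Finset.sum_insert (by simp [d4, d5]),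
    Finset.sum_pair d6, Finset.card_insert_of_notMem (by simp [d1, d2, d3]),
    Finset.card_insert_of_notMem (by simp [d4, d5]), Finset.card_pair d6,
    phaseCount_blankTopCut hn, phaseCount_apexTopCut hn, phaseCount_leftCornerTopCut hn,
    phaseCount_rightCornerTopCut hn] at hcount
  omega

theorem sierpinski_topcut_additivity (n : ℕ) (hn : 2 ≤ n) :
    (PtopCutRC n 0 0).ncard + (PtopCutRC n 1 0).ncard + (PtopCutRC n 1 2).ncard +
      (PtopCutRC n 0 2).ncard = (PtopCut n).ncard + 6 := by
  obtain ⟨T, hT⟩ := (PtopCut_finite n).exists_finset_coe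
  have hsum : ∑ i ∈ phases, (PtopCutRC n i.1 i.2).ncard = ∑ p ∈ T, phaseCount n p :=
    sum_ncard_eq_sum_card_filter phases (fun i => PtopCutRC n i.1 i.2) T
      fun i _ => hT ▸ PtopCutRC_subset n i.1 i.2
  rw [phases, Finset.sum_insert (by decide), Finset.sum_insert (by decide),
    Finset.sum_pair (by decide), sum_phaseCount_eq hn hT] at hsum
  rw [← hT, Set.ncard_coe_finset, ← hsum]
  ring
end

section
/- Let n ≥ 1 and set N = 2n. Then: P_up^{(0,0)}(N) ∩ P_up^{(1,0)}(N) = {blank_N}; P_up^{(0,0)}(N) ∩ P_up^{(1,2)}(N) = {blank_N}; P_up^{(0,0)}(N) ∩ P_up^{(0,2)}(N) = {blank_N}; P_up^{(1,0)}(N) ∩ P_up^{(1,2)}(N) = {blank_N, top_N}; P_up^{(1,0)}(N) ∩ P_up^{(0,2)}(N) = {blank_N, botleft_N}; and P_up^{(1,2)}(N) ∩ P_up^{(0,2)}(N) = {blank_N, botright_N}. -/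
namespace Sierpinski

theorem choose_pow_mul_add_modEq {p : ℕ} [Fact p.Prime] (K a b : ℕ) {s j : ℕ}
    (hs : s < p ^ K) (hj : j < p ^ K) :
    (p ^ K * a + s).choose (p ^ K * b + j) ≡ a.choose b * s.choose j [MOD p] := by
  induction K generalizing s j with
  | zero =>
    simp only [pow_zero] at hs hj
    simp [Nat.lt_one_iff.mp hs, Nat.lt_one_iff.mp hj, Nat.ModEq.refl]
  | succ K ih =>
    have hp : 0 < p := (Fact.out : p.Prime).pos
    have hdiv (t c : ℕ) : (p ^ (K + 1) * c + t) / p = p ^ K * c + t / p := by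
      rw [pow_succ, mul_comm (p ^ K) p, mul_assoc, Nat.add_comm, Nat.add_mul_div_left _ _ hp,
        Nat.add_comm]
    have hmod (t c : ℕ) : (p ^ (K + 1) * c + t) % p = t % p := by
      rw [pow_succ, mul_comm (p ^ K) p, mul_assoc, Nat.mul_add_mod]
    have hlt {t : ℕ} (ht : t < p ^ (K + 1)) : t / p < p ^ K :=
      Nat.div_lt_of_lt_mul (by rwa [mul_comm, ← pow_succ])
    calc (p ^ (K + 1) * a + s).choose (p ^ (K + 1) * b + j)
        ≡ (s % p).choose (j % p) * (p ^ K * a + s / p).choose (p ^ K * b + j / p) [MOD p] := by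
          have := Choose.choose_modEq_choose_mod_mul_choose_div_nat
            (n := p ^ (K + 1) * a + s) (k := p ^ (K + 1) * b + j) (p := p)
          rwa [hdiv, hdiv, hmod, hmod] at this
      _ ≡ (s % p).choose (j % p) * (a.choose b * (s / p).choose (j / p)) [MOD p] :=
          Nat.ModEq.mul_left _ (ih (hlt hs) (hlt hj))
      _ = a.choose b * ((s % p).choose (j % p) * (s / p).choose (j / p)) := by ring
      _ ≡ a.choose b * s.choose j [MOD p] :=
          Nat.ModEq.mul_left _ Choose.choose_modEq_choose_mod_mul_choose_div_nat.symm

theorem choose_two_pow_add_mod_two_eq_zero {K s j : ℕ} (hsj : s < j) (hj : j < 2 ^ K) :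
    (2 ^ K + s).choose j % 2 = 0 := by
  have h := choose_pow_mul_add_modEq K 1 0 (lt_trans hsj hj) hj
  rw [mul_one, mul_zero, zero_add] at h
  rw [h, Nat.choose_eq_zero_of_lt hsj, mul_zero, Nat.zero_mod]

theorem choose_two_pow_sub_one_mod_two (K : ℕ) {j : ℕ} (hj : j < 2 ^ K) :
    (2 ^ K - 1).choose j % 2 = 1 := by
  induction K generalizing j with
  | zero => simp_all
  | succ K ih =>
    have hK := Nat.one_le_two_pow (n := K)
    have hpow : 2 ^ (K + 1) = 2 * 2 ^ K := by ring
    rw [Choose.choose_modEq_choose_mod_mul_choose_div_nat (p := 2),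
      show (2 ^ (K + 1) - 1) % 2 = 1 by omega, show (2 ^ (K + 1) - 1) / 2 = 2 ^ K - 1 by omega,
      Nat.mul_mod, ih (by omega)]
    rcases Nat.mod_two_eq_zero_or_one j with h | h <;> simp [h]

def IsHole (x y : ℕ) : Prop := x % 2 = 0 ∧ y % 4 = 2

theorem filled_two_mul (x j : ℕ) : filled x (2 * j) = decide (x.choose j % 2 = 1) := by
  simp [filled]

theorem filled_eq_true_iff (x y : ℕ) :
    filled x y = true ↔ y % 2 = 0 ∧ ¬IsHole x y ∧ (x / 2).choose (y / 4) % 2 = 1 := by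
  simp only [filled, IsHole, decide_eq_true_eq]
  rw [Choose.choose_modEq_choose_mod_mul_choose_div_nat (p := 2),
    show y / 2 / 2 = y / 4 by omega, Nat.mul_mod]
  rcases Nat.mod_two_eq_zero_or_one x with hx | hx <;>
    rcases Nat.mod_two_eq_zero_or_one (y / 2) with hy | hy <;>
    simp only [hx, hy, Nat.choose_self, Nat.choose_zero_right, Nat.choose_one_right,
      true_and] <;> omega

theorem filled_eq_false_of_isHole {x y : ℕ} (h : IsHole x y) : filled x y = false := by
  rw [← Bool.not_eq_true, filled_eq_true_iff]
  tauto

theorem filled_of_filled_of_div_eq {x y x' y' : ℕ} (h : filled x y = true) (hx : x' / 2 = x / 2)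
    (hy : y' / 4 = y / 4) (hy' : y' % 2 = 0) (hhole : ¬IsHole x' y') : filled x' y' = true := by
  rw [filled_eq_true_iff] at h ⊢
  exact ⟨hy', hhole, hx ▸ hy ▸ h.2.2⟩

theorem filled_two_pow_add_eq_false {K s y : ℕ} (hs : 2 * s < y) (hy : y < 2 * 2 ^ K) :
    filled (2 ^ K + s) y = false := by
  rcases Nat.even_or_odd' y with ⟨j, rfl | rfl⟩
  · rw [filled_two_mul, choose_two_pow_add_mod_two_eq_zero (by omega) (by omega)]
    rfl
  · simp [filled]

theorem filled_two_pow_sub_one (K : ℕ) {j : ℕ} (hj : j < 2 ^ K) :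
    filled (2 ^ K - 1) (2 * j) = true := by
  simp [filled_two_mul, choose_two_pow_sub_one_mod_two K hj]

theorem filled_two_pow_add_self {K s : ℕ} (hs : s < 2 ^ K) :
    filled (2 ^ K + s) (2 * s) = true := by
  have h := choose_pow_mul_add_modEq K 1 0 hs hs
  rw [mul_one, mul_zero, zero_add, Nat.choose_self, Nat.choose_zero_right] at h
  rw [filled_two_mul]
  exact decide_eq_true h

theorem filled_two_pow_add_two_pow {K s : ℕ} (hs : s < 2 ^ K) :
    filled (2 ^ K + s) (2 * 2 ^ K) = true := by
  have h := choose_pow_mul_add_modEq K 1 1 hs (Nat.two_pow_pos K)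
  rw [mul_one, add_zero, Nat.choose_self, Nat.choose_zero_right] at h
  rw [filled_two_mul]
  exact decide_eq_true h

theorem upPattern_mk {N r c k m : ℕ} (hk : k < N) (hm : m ≤ 2 * k) :
    upPattern N r c (k, m) = filled (r + k) (c + m) :=
  if_pos ⟨hk, hm⟩

theorem lt_of_upPattern_eq_true {N r c : ℕ} {q : ℕ × ℕ} (h : upPattern N r c q = true) :
    q.1 < N ∧ q.2 ≤ 2 * q.1 := by
  by_contra hq
  simp [upPattern, hq] at h

theorem upPattern_eq_of_forall {N r c : ℕ} {p : ℕ × ℕ → Bool}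
    (hp : ∀ q : ℕ × ℕ, ¬(q.1 < N ∧ q.2 ≤ 2 * q.1) → p q = false)
    (h : ∀ k m, k < N → m ≤ 2 * k → filled (r + k) (c + m) = p (k, m)) :
    upPattern N r c = p := by
  funext ⟨k, m⟩
  by_cases hq : k < N ∧ m ≤ 2 * k
  · rw [upPattern_mk hq.1 hq.2, h k m hq.1 hq.2]
  · rw [hp _ hq]
    exact if_neg hq

theorem blankUp_mem_PupRC (N : ℕ) {ρ γ : ℕ} (hρ : ρ < 2) (hγ : γ = 0 ∨ γ = 2) :
    blankUp ∈ PupRC N ρ γ := by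
  have hpow : 2 ^ (N + 2) = 4 * 2 ^ N := by ring
  have hN := Nat.lt_two_pow_self (n := N)
  refine ⟨2 ^ (N + 2) + ρ, 2 * (2 * (N + 1)) + γ, by omega, by omega, by omega, by omega,
    (upPattern_eq_of_forall (fun _ _ => rfl) fun k m hk hm => ?_).symm⟩
  rw [add_assoc]
  exact filled_two_pow_add_eq_false (by omega) (by omega)

theorem topUp_mem_PupRC {N γ : ℕ} (hN : 0 < N) (hγ : γ = 0 ∨ γ = 2) : topUp ∈ PupRC N 1 γ := by
  have hpow : 2 ^ (N + 2) = 4 * 2 ^ N := by ring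
  have hN' := Nat.lt_two_pow_self (n := N)
  refine ⟨2 ^ (N + 2) - 1, 2 * (2 * N) + γ, by omega, by omega, by omega, by omega,
    (upPattern_eq_of_forall (fun q hq => ?_) fun k m hk hm => ?_).symm⟩
  · simp only [topUp, decide_eq_false_iff_not]
    rintro rfl
    exact hq ⟨hN, le_rfl⟩
  · by_cases hk0 : k = 0
    · obtain rfl : m = 0 := by omega
      simpa [topUp, hk0, show 2 * (2 * N) + γ = 2 * (2 * N + γ / 2) by omega]
        using filled_two_pow_sub_one (N + 2) (j := 2 * N + γ / 2) (by omega)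
    · simp only [topUp, Prod.mk.injEq, hk0, false_and, decide_false]
      rw [show 2 ^ (N + 2) - 1 + k = 2 ^ (N + 2) + (k - 1) by omega]
      exact filled_two_pow_add_eq_false (by omega) (by omega)

theorem botleftUp_mem_PupRC {N ρ γ : ℕ} (hN : 0 < N) (hρ : ρ < 2)
    (hγ : γ = 2 * ((ρ + N - 1) % 2)) : botleftUp N ∈ PupRC N ρ γ := by
  have hpow : 2 ^ (N + 2) = 4 * 2 ^ N := by ring
  have hN' := Nat.lt_two_pow_self (n := N)
  refine ⟨2 ^ (N + 2) + ρ, 2 * (ρ + N - 1), by omega, by omega, by omega, by omega,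
    (upPattern_eq_of_forall (fun q hq => ?_) fun k m hk hm => ?_).symm⟩
  · simp only [botleftUp, decide_eq_false_iff_not]
    rintro rfl
    exact hq ⟨by omega, by omega⟩
  · rw [add_assoc]
    by_cases hq : (k, m) = (N - 1, 0)
    · obtain ⟨rfl, rfl⟩ := Prod.mk.inj hq
      simpa [botleftUp, show ρ + (N - 1) = ρ + N - 1 by omega]
        using filled_two_pow_add_self (K := N + 2) (s := ρ + N - 1) (by omega)
    · simp only [botleftUp, hq, decide_false]
      exact filled_two_pow_add_eq_false (by grind) (by omega)

theorem botrightUp_mem_PupRC {N ρ γ : ℕ} (hN : 0 < N) (hρ : ρ < 2)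
    (hγ : γ = 2 * ((N - 1) % 2)) : botrightUp N ∈ PupRC N ρ γ := by
  have hpow : 2 ^ (N + 2) = 4 * 2 ^ N := by ring
  have hN' := Nat.lt_two_pow_self (n := N)
  refine ⟨2 ^ (N + 2) + ρ, 2 * 2 ^ (N + 2) + 2 - 2 * N, by omega, by omega, by omega, by omega,
    (upPattern_eq_of_forall (fun q hq => ?_) fun k m hk hm => ?_).symm⟩
  · simp only [botrightUp, decide_eq_false_iff_not]
    rintro rfl
    exact hq ⟨by omega, by omega⟩
  · rw [add_assoc]
    by_cases hq : (k, m) = (N - 1, 2 * (N - 1))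
    · obtain ⟨rfl, rfl⟩ := Prod.mk.inj hq
      simpa [botrightUp,
          show 2 * 2 ^ (N + 2) + 2 - 2 * N + 2 * (N - 1) = 2 * 2 ^ (N + 2) by omega]
        using filled_two_pow_add_two_pow (K := N + 2) (s := ρ + (N - 1)) (by omega)
    · simp only [botrightUp, hq, decide_false]
      exact filled_two_pow_add_eq_false (by omega) (by grind)

def InWindow (N : ℕ) (q : ℤ × ℤ) : Prop := 0 ≤ q.1 ∧ q.1 < N ∧ 0 ≤ q.2 ∧ q.2 ≤ 2 * q.1

/-- The unit of the size-2 subtriangle containing `(k, m)`, relative to a window whose row and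
column are `≡ ρ [MOD 2]` and `≡ γ [MOD 4]`, that is a hole relative to a window with residues `ρ'`
and `γ'`; in window coordinates, which may be negative. -/
def crossHole (ρ γ ρ' γ' k m : ℕ) : ℤ × ℤ :=
  (k - ((ρ + k) % 2 : ℕ) + ((ρ + ρ') % 2 : ℕ), m - ((γ + m) % 4 : ℕ) + ((γ + γ' + 2) % 4 : ℕ))

theorem not_inWindow_crossHole {N r c r' c' k m : ℕ} (hc : c % 2 = 0) (hc' : c' % 2 = 0)
    (hclass : ¬(r % 2 = r' % 2 ∧ c % 4 = c' % 4))
    (hagree : ∀ k m, k < N → m ≤ 2 * k → filled (r + k) (c + m) = filled (r' + k) (c' + m))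
    (hfill : filled (r + k) (c + m) = true) :
    ¬InWindow N (crossHole (r % 2) (c % 4) (r' % 2) (c' % 4) k m) := by
  rintro ⟨hk0, hkN, hm0, hmk⟩
  obtain ⟨k', hk'⟩ := Int.eq_ofNat_of_zero_le hk0
  obtain ⟨m', hm'⟩ := Int.eq_ofNat_of_zero_le hm0
  rw [hk'] at hkN hmk
  rw [hm'] at hmk
  simp only [crossHole] at hk' hm'
  have hcm := ((filled_eq_true_iff _ _).1 hfill).1
  have hfill' : filled (r + k') (c + m') = true :=
    filled_of_filled_of_div_eq hfill (by omega) (by omega) (by omega) (by simp only [IsHole]; omega)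
  rw [hagree k' m' (by omega) (by omega),
    filled_eq_false_of_isHole (by simp only [IsHole]; omega)] at hfill'
  exact Bool.false_ne_true hfill'

/-- A necessary condition for the unit `(k, m)` to be filled in a pattern occurring in the
classes `(ρ, γ)` and `(ρ', γ')`. -/
def IsSharedUnit (N ρ γ ρ' γ' k m : ℕ) : Prop :=
  m % 2 = 0 ∧ ¬IsHole (ρ + k) (γ + m) ∧ ¬IsHole (ρ' + k) (γ' + m) ∧
    ¬InWindow N (crossHole ρ γ ρ' γ' k m) ∧ ¬InWindow N (crossHole ρ' γ' ρ γ k m)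

theorem isSharedUnit_of_filled {N r c r' c' k m : ℕ} (hc : c % 2 = 0) (hc' : c' % 2 = 0)
    (hclass : ¬(r % 2 = r' % 2 ∧ c % 4 = c' % 4))
    (hagree : ∀ k m, k < N → m ≤ 2 * k → filled (r + k) (c + m) = filled (r' + k) (c' + m))
    (hk : k < N) (hm : m ≤ 2 * k) (hfill : filled (r + k) (c + m) = true) :
    IsSharedUnit N (r % 2) (c % 4) (r' % 2) (c' % 4) k m := by
  have hfill' : filled (r' + k) (c' + m) = true := hagree k m hk hm ▸ hfill
  obtain ⟨hcm, hhole, -⟩ := (filled_eq_true_iff _ _).1 hfill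
  obtain ⟨-, hhole', -⟩ := (filled_eq_true_iff _ _).1 hfill'
  simp only [IsHole] at hhole hhole'
  refine ⟨by omega, by simp only [IsHole]; omega, by simp only [IsHole]; omega,
    not_inWindow_crossHole hc hc' hclass hagree hfill,
    not_inWindow_crossHole hc' hc (by omega) (fun k m hk hm => (hagree k m hk hm).symm) hfill'⟩

theorem exists_upPattern_of_mem_PupRC_inter {N ρ γ ρ' γ' : ℕ} {p : ℕ × ℕ → Bool}
    (hclass : ¬(ρ = ρ' ∧ γ = γ')) (hp : p ∈ PupRC N ρ γ ∩ PupRC N ρ' γ') :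
    ∃ r c, p = upPattern N r c ∧ ∀ k m, k < N → m ≤ 2 * k →
      filled (r + k) (c + m) = true → IsSharedUnit N ρ γ ρ' γ' k m := by
  obtain ⟨⟨r, c, hc, -, rfl, rfl, rfl⟩, r', c', hc', -, rfl, rfl, hpp⟩ := hp
  refine ⟨r, c, rfl, fun k m hk hm => isSharedUnit_of_filled hc hc' hclass ?_ hk hm⟩
  intro k m hk hm
  rw [← upPattern_mk hk hm, ← upPattern_mk hk hm, hpp]

theorem PupRC_inter_eq_singleton {N ρ γ ρ' γ' : ℕ} (hclass : ¬(ρ = ρ' ∧ γ = γ'))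
    (hblank : blankUp ∈ PupRC N ρ γ ∩ PupRC N ρ' γ')
    (hshared : ∀ k m, k < N → m ≤ 2 * k → ¬IsSharedUnit N ρ γ ρ' γ' k m) :
    PupRC N ρ γ ∩ PupRC N ρ' γ' = {blankUp} := by
  refine Set.eq_singleton_iff_unique_mem.2 ⟨hblank, fun p hp => ?_⟩
  obtain ⟨r, c, rfl, hfilled⟩ := exists_upPattern_of_mem_PupRC_inter hclass hp
  refine upPattern_eq_of_forall (fun _ _ => rfl) fun k m hk hm => ?_
  by_contra hfill
  exact hshared k m hk hm (hfilled k m hk hm (by simpa [blankUp] using hfill))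

theorem PupRC_inter_eq_pair {N ρ γ ρ' γ' : ℕ} (q₀ : ℕ × ℕ) (hclass : ¬(ρ = ρ' ∧ γ = γ'))
    (hblank : blankUp ∈ PupRC N ρ γ ∩ PupRC N ρ' γ')
    (hq₀ : (fun q => decide (q = q₀)) ∈ PupRC N ρ γ ∩ PupRC N ρ' γ')
    (hshared : ∀ k m, k < N → m ≤ 2 * k → IsSharedUnit N ρ γ ρ' γ' k m → (k, m) = q₀) :
    PupRC N ρ γ ∩ PupRC N ρ' γ' = {blankUp, fun q => decide (q = q₀)} := by
  refine subset_antisymm (fun p hp => ?_)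
    (Set.insert_subset hblank (Set.singleton_subset_iff.2 hq₀))
  obtain ⟨r, c, rfl, hfilled⟩ := exists_upPattern_of_mem_PupRC_inter hclass hp
  have hq₀N : q₀.1 < N ∧ q₀.2 ≤ 2 * q₀.1 := by
    obtain ⟨r₀, c₀, -, -, -, -, he⟩ := hq₀.1
    exact lt_of_upPattern_eq_true (by simpa using (congrFun he q₀).symm)
  have hoff : ∀ k m, k < N → m ≤ 2 * k → (k, m) ≠ q₀ → filled (r + k) (c + m) = false :=
    fun k m hk hm hne => by
      by_contra hfill
      exact hne (hshared k m hk hm (hfilled k m hk hm (by simpa using hfill)))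
  by_cases h₀ : filled (r + q₀.1) (c + q₀.2) = true
  · refine Or.inr (upPattern_eq_of_forall (fun q hq => ?_) fun k m hk hm => ?_)
    · simpa using fun h : q = q₀ => hq (h ▸ hq₀N)
    · by_cases hq : (k, m) = q₀
      · subst hq
        simpa using h₀
      · simp [hq, hoff k m hk hm hq]
  · refine Or.inl (upPattern_eq_of_forall (fun _ _ => rfl) fun k m hk hm => ?_)
    by_cases hq : (k, m) = q₀
    · simpa [← hq, blankUp] using h₀
    · exact hoff k m hk hm hq

end Sierpinski

open Sierpinski

theorem sierpinski_up_intersections_even (n : ℕ) (hn : 1 ≤ n) :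
    PupRC (2 * n) 0 0 ∩ PupRC (2 * n) 1 0 = {blankUp} ∧
    PupRC (2 * n) 0 0 ∩ PupRC (2 * n) 1 2 = {blankUp} ∧
    PupRC (2 * n) 0 0 ∩ PupRC (2 * n) 0 2 = {blankUp} ∧
    PupRC (2 * n) 1 0 ∩ PupRC (2 * n) 1 2 = {blankUp, topUp} ∧
    PupRC (2 * n) 1 0 ∩ PupRC (2 * n) 0 2 = {blankUp, botleftUp (2 * n)} ∧
    PupRC (2 * n) 1 2 ∩ PupRC (2 * n) 0 2 = {blankUp, botrightUp (2 * n)} := by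
  have hN : 0 < 2 * n := by omega
  have b00 : blankUp ∈ PupRC (2 * n) 0 0 := blankUp_mem_PupRC _ (by decide) (by decide)
  have b10 : blankUp ∈ PupRC (2 * n) 1 0 := blankUp_mem_PupRC _ (by decide) (by decide)
  have b12 : blankUp ∈ PupRC (2 * n) 1 2 := blankUp_mem_PupRC _ (by decide) (by decide)
  have b02 : blankUp ∈ PupRC (2 * n) 0 2 := blankUp_mem_PupRC _ (by decide) (by decide)
  refine ⟨PupRC_inter_eq_singleton (by decide) ⟨b00, b10⟩ ?_,
    PupRC_inter_eq_singleton (by decide) ⟨b00, b12⟩ ?_,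
    PupRC_inter_eq_singleton (by decide) ⟨b00, b02⟩ ?_,
    PupRC_inter_eq_pair (0, 0) (by decide) ⟨b10, b12⟩
      ⟨topUp_mem_PupRC hN (by decide), topUp_mem_PupRC hN (by decide)⟩ ?_,
    PupRC_inter_eq_pair (2 * n - 1, 0) (by decide) ⟨b10, b02⟩
      ⟨botleftUp_mem_PupRC hN (by decide) (by omega),
        botleftUp_mem_PupRC hN (by decide) (by omega)⟩ ?_,
    PupRC_inter_eq_pair (2 * n - 1, 2 * (2 * n - 1)) (by decide) ⟨b12, b02⟩
      ⟨botrightUp_mem_PupRC hN (by decide) (by omega),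
        botrightUp_mem_PupRC hN (by decide) (by omega)⟩ ?_⟩
  -- The parity of the size enters here: it decides which corners escape both cross holes.
  all_goals
    intro k m hk hm
    simp only [IsSharedUnit, IsHole, InWindow, crossHole, Prod.mk.injEq]
    omega
end
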